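/- arXiv:2311.18177 — 2 statements merged into one kernel-verified Lean document; each statement's English description precedes it below -/
import Mathlib

section
/- Fix θ ∈ (0, π/2) and an orthonormal set {v₀, v₁, …, v_K} in ℝⁿ. Define u₀ = v₀ and, for 1 ≤ k ≤ K, u_k = ( (1/k) Σ_{i=0}^{k−1} uᵢ + t_k v_k ) / ‖ (1/k) Σ_{i=0}^{k−1} uᵢ + t_k v_k ‖, where t_k = √( ((Σ_{i=0}^{k−1} uᵢ) · u_{k−1} / (k cos θ))² − ((k−1)cos θ + 1)/k ). Then for all 0 ≤ i, j ≤ K: uᵢ · u_j = cos θ if i ≠ j, and uᵢ · u_j = 1 if i = j. -/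
open BigOperators

/-- The heterophily basis construction produces vectors with pairwise inner products
`cos θ` (and unit norms). -/
theorem stmt8 (n K : ℕ) (θ : ℝ) (hθ : θ ∈ Set.Ioo 0 (Real.pi/2))
    (v : ℕ → EuclideanSpace ℝ (Fin n))
    (h_on : ∀ i ≤ K, ∀ j ≤ K, (inner ℝ (v i) (v j) : ℝ) = if i = j then 1 else 0)
    (u : ℕ → EuclideanSpace ℝ (Fin n)) (t : ℕ → ℝ)
    (hu0 : u 0 = v 0)
    (ht : ∀ k, 1 ≤ k → k ≤ K → t k =
      Real.sqrt (((inner ℝ (∑ i ∈ Finset.range k, u i) (u (k-1)) : ℝ) / (k * Real.cos θ))^2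
        - (((k:ℝ)-1) * Real.cos θ + 1)/k))
    (huk : ∀ k, 1 ≤ k → k ≤ K → u k =
      ‖((k:ℝ)⁻¹ • ∑ i ∈ Finset.range k, u i) + t k • v k‖⁻¹ •
        (((k:ℝ)⁻¹ • ∑ i ∈ Finset.range k, u i) + t k • v k)) :
    ∀ i ≤ K, ∀ j ≤ K, (inner ℝ (u i) (u j) : ℝ) = if i = j then 1 else Real.cos θ := by
  set c := Real.cos θ with hcdef
  have hc0 : 0 < c := Real.cos_pos_of_mem_Ioo ⟨by linarith [hθ.1, Real.pi_pos], hθ.2⟩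
  have hc1 : c < 1 := by
    have h := Real.cos_lt_cos_of_nonneg_of_le_pi le_rfl
      (by linarith [hθ.2, Real.pi_pos] : θ ≤ Real.pi) hθ.1
    simpa [hcdef] using h
  have main : ∀ k, k ≤ K →
      (∀ i ≤ k, ∀ j ≤ k, (inner ℝ (u i) (u j) : ℝ) = if i = j then 1 else c) ∧
      (∀ m, m ≤ K → ∀ i ≤ k, i < m → (inner ℝ (v m) (u i) : ℝ) = 0) := by
    intro k
    induction k with
    | zero =>
      intro _
      constructor
      · intro i hi j hj
        interval_cases i; interval_cases j
        have h := h_on 0 (Nat.zero_le K) 0 (Nat.zero_le K)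
        rw [if_pos rfl] at h
        rw [hu0, if_pos rfl]; exact h
      · intro m hm i hi him
        interval_cases i
        rw [hu0]
        have h := h_on m hm 0 (Nat.zero_le K)
        rw [if_neg (Nat.pos_iff_ne_zero.mp him)] at h
        exact h
    | succ k IH =>
      intro hk
      obtain ⟨IH1, IH2⟩ := IH (le_trans (Nat.le_succ k) hk)
      set S := ∑ i ∈ Finset.range (k+1), u i with hSdef
      set a : ℝ := 1 + (k:ℝ) * c with hadef
      have ha : 1 ≤ a := by
        have : 0 ≤ (k:ℝ) * c := mul_nonneg (Nat.cast_nonneg k) hc0.le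
        linarith
      have ha0 : 0 < a := by linarith
      set kr : ℝ := (k:ℝ) + 1 with hkrdef
      have hkr : 0 < kr := by positivity
      have hkr' : ((k+1:ℕ):ℝ) = kr := by push_cast; ring
      have hSu : ∀ j ≤ k, (inner ℝ S (u j) : ℝ) = a := by
        intro j hj
        rw [hSdef, sum_inner]
        have h1 : ∀ i ∈ Finset.range (k+1), (inner ℝ (u i) (u j) : ℝ)
            = (fun i => c + if i = j then 1 - c else 0) i := by
          intro i hi
          rw [IH1 i (Nat.lt_succ_iff.mp (Finset.mem_range.mp hi)) j hj]
          by_cases h : i = j <;> simp [h]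
        rw [Finset.sum_congr rfl h1, Finset.sum_add_distrib, Finset.sum_const,
          Finset.sum_ite_eq' (Finset.range (k+1)) j (fun _ => (1:ℝ) - c)]
        simp only [Finset.mem_range, Nat.lt_succ_iff.mpr hj, if_true, Finset.card_range,
          nsmul_eq_mul]
        push_cast; ring
      have hSS : (inner ℝ S S : ℝ) = kr * a := by
        rw [hSdef, inner_sum]
        have h1 : ∀ i ∈ Finset.range (k+1), (inner ℝ S (u i) : ℝ) = a := fun i hi =>
          hSu i (Nat.lt_succ_iff.mp (Finset.mem_range.mp hi))
        rw [Finset.sum_congr rfl h1, Finset.sum_const, Finset.card_range, nsmul_eq_mul, hkr']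
      have hvS : ∀ m, k < m → m ≤ K → (inner ℝ (v m) S : ℝ) = 0 := by
        intro m hm hmK
        rw [hSdef, inner_sum]
        apply Finset.sum_eq_zero
        intro i hi
        exact IH2 m hmK i (Nat.lt_succ_iff.mp (Finset.mem_range.mp hi))
          (lt_of_le_of_lt (Nat.lt_succ_iff.mp (Finset.mem_range.mp hi)) hm)
      have hvv : (inner ℝ (v (k+1)) (v (k+1)) : ℝ) = 1 := by
        simpa using h_on (k+1) hk (k+1) hk
      have hk1 : 1 ≤ k + 1 := Nat.succ_le_succ (Nat.zero_le k)
      -- value of t²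
      have hD : 0 ≤ (a / (kr * c))^2 - a / kr := by
        have key : 0 ≤ a - kr * c^2 := by nlinarith
        have : (a / (kr * c))^2 - a / kr = a * (a - kr * c^2) / (kr * c)^2 := by
          field_simp
        rw [this]
        positivity
      have ht2 : (t (k+1))^2 = (a / (kr * c))^2 - a / kr := by
        rw [ht (k+1) hk1 hk]
        have hred : k + 1 - 1 = k := rfl
        rw [hred, ← hSdef, hSu k le_rfl, hkr']
        have e : (kr - 1) * c + 1 = a := by rw [hadef, hkrdef]; ring
        rw [e, Real.sq_sqrt hD]
      -- the unnormalized vector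
      clear_value S a kr
      obtain ⟨w, hwdef⟩ : ∃ w : EuclideanSpace ℝ (Fin n),
          w = (((k+1:ℕ):ℝ))⁻¹ • S + t (k+1) • v (k+1) := ⟨_, rfl⟩
      have hu' : u (k+1) = ‖w‖⁻¹ • w := by
        rw [huk (k+1) hk1 hk, ← hSdef, ← hwdef]
      have hSv : (inner ℝ S (v (k+1)) : ℝ) = 0 := by
        rw [real_inner_comm]; exact hvS (k+1) (Nat.lt_succ_self k) hk
      have hww : (inner ℝ w w : ℝ) = (a / (kr * c))^2 := by
        rw [hwdef, real_inner_add_add_self, real_inner_smul_left, real_inner_smul_right,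
          real_inner_smul_left, real_inner_smul_right, real_inner_smul_left,
          real_inner_smul_right, hSS, hvv, hSv, hkr']
        have : kr⁻¹ * (kr⁻¹ * (kr * a)) = a / kr := by field_simp
        rw [this]
        have htt : t (k+1) * (t (k+1) * 1) = (a / (kr * c))^2 - a / kr := by
          rw [mul_one, ← pow_two, ht2]
        rw [htt]; ring
      have hnw : ‖w‖ = a / (kr * c) := by
        have h1 : ‖w‖^2 = (a / (kr * c))^2 := by
          rw [← real_inner_self_eq_norm_sq, hww]
        have h2 : 0 < a / (kr * c) := by positivity
        nlinarith [norm_nonneg w]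
      have hvu' : ∀ j ≤ k, (inner ℝ (v (k+1)) (u j) : ℝ) = 0 := fun j hj =>
        IH2 (k+1) hk j hj (Nat.lt_succ_of_le hj)
      have hcu : ∀ j ≤ k, (inner ℝ (u (k+1)) (u j) : ℝ) = c := by
        intro j hj
        have hwu : (inner ℝ w (u j) : ℝ) = kr⁻¹ * a := by
          rw [hwdef, inner_add_left, real_inner_smul_left, real_inner_smul_left,
            hSu j hj, hvu' j hj, hkr', mul_zero, add_zero]
        rw [hu', real_inner_smul_left, hwu, hnw]
        field_simp
      have huu : (inner ℝ (u (k+1)) (u (k+1)) : ℝ) = 1 := by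
        rw [hu', real_inner_smul_left, real_inner_smul_right, hww, hnw]
        have h2 : a / (kr * c) ≠ 0 := by positivity
        field_simp
      constructor
      · intro i hi j hj
        rcases eq_or_lt_of_le hi with hi' | hi'
        · rcases eq_or_lt_of_le hj with hj' | hj'
          · rw [hi', hj', if_pos rfl, huu]
          · have hj'' : j ≤ k := Nat.lt_succ_iff.mp hj'
            rw [if_neg (by omega), hi', hcu j hj'']
        · have hi'' : i ≤ k := Nat.lt_succ_iff.mp hi'
          rcases eq_or_lt_of_le hj with hj' | hj'
          · rw [if_neg (by omega), hj', real_inner_comm, hcu i hi'']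
          · exact IH1 i hi'' j (Nat.lt_succ_iff.mp hj')
      · intro m hm i hi him
        rcases eq_or_lt_of_le hi with hi' | hi'
        · subst hi'
          have hmne : m ≠ k + 1 := by omega
          have hv0 : (inner ℝ (v m) (v (k+1)) : ℝ) = 0 := by
            have h := h_on m hm (k+1) hk
            rwa [if_neg hmne] at h
          rw [hu', real_inner_smul_right, hwdef, inner_add_right, real_inner_smul_right,
            real_inner_smul_right, hvS m (by omega) hm, hv0]
          simp
        · exact IH2 m hm i (Nat.lt_succ_iff.mp hi') him
  intro i hi j hj
  exact (main K le_rfl).1 i hi j hj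
end

section
/- Let θ ∈ (0, π/2) and let u₀, …, u_{k−1} be unit vectors with pairwise inner products cos θ, all lying in the span of an orthonormal set {v₀,…,v_{k−1}}, and let v_k be a unit vector orthogonal to that span. With s = Σ_{i=0}^{k−1} uᵢ and t_k = √( (s·u_{k−1}/(k cos θ))² − ((k−1)cos θ + 1)/k ), the vector w = s/k + t_k v_k satisfies ‖w‖ = (1 + (k−1)cos θ)/(k cos θ), and u_k = w/‖w‖ satisfies u_k · u_j = cos θ for every 0 ≤ j ≤ k−1. -/
open BigOperators

/-- Inductive step of the heterophily-basis construction: with `s = Σᵢ uᵢ` and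
`t_k` as given, `w = s/k + t_k v_k` has norm `(1+(k−1)cosθ)/(k cosθ)` and its
normalization forms angle `θ` with every previous `u_j`. -/
theorem stmt10 (n k : ℕ) (hk : 1 ≤ k) (θ : ℝ) (hθ : θ ∈ Set.Ioo 0 (Real.pi/2))
    (v u : ℕ → EuclideanSpace ℝ (Fin n))
    (hunit : ∀ i < k, ‖u i‖ = 1)
    (hangle : ∀ i < k, ∀ j < k, i ≠ j → (inner ℝ (u i) (u j) : ℝ) = Real.cos θ)
    (hspan : ∀ i < k, u i ∈ Submodule.span ℝ (v '' Set.Iio k))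
    (hvk_unit : ‖v k‖ = 1)
    (hvk_orth : ∀ y ∈ Submodule.span ℝ (v '' Set.Iio k), (inner ℝ (v k) y : ℝ) = 0)
    (s : EuclideanSpace ℝ (Fin n)) (hs : s = ∑ i ∈ Finset.range k, u i)
    (t : ℝ) (ht : t = Real.sqrt (((inner ℝ s (u (k-1)) : ℝ)/((k:ℝ) * Real.cos θ))^2
      - (((k:ℝ)-1)*Real.cos θ + 1)/k))
    (w : EuclideanSpace ℝ (Fin n)) (hw : w = (k:ℝ)⁻¹ • s + t • v k) :
    ‖w‖ = (1 + ((k:ℝ)-1)*Real.cos θ)/((k:ℝ)*Real.cos θ) ∧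
    ∀ j < k, (inner ℝ (‖w‖⁻¹ • w) (u j) : ℝ) = Real.cos θ := by
  set c : ℝ := Real.cos θ with hc
  have hθ0 := hθ.1
  have hc0 : 0 < c := Real.cos_pos_of_mem_Ioo
    ⟨by linarith [Real.pi_pos], hθ.2⟩
  have hc1 : c < 1 := by
    have := Real.cos_lt_cos_of_nonneg_of_le_pi le_rfl
      (by linarith [Real.pi_pos, hθ.2]) hθ0
    simpa using this
  have hk0 : (0:ℝ) < (k:ℝ) := by exact_mod_cast hk
  set a : ℝ := 1 + ((k:ℝ)-1)*c with ha
  have hkc : (0:ℝ) ≤ (k:ℝ) - 1 := by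
    have : (1:ℝ) ≤ (k:ℝ) := by exact_mod_cast hk
    linarith
  have ha0 : 0 < a := by nlinarith
  -- inner s (u j) = a for all j < k
  have hsu : ∀ j < k, (inner ℝ s (u j) : ℝ) = a := by
    intro j hj
    rw [hs, sum_inner]
    have hjmem : j ∈ Finset.range k := Finset.mem_range.mpr hj
    rw [← Finset.add_sum_erase _ _ hjmem]
    have h1 : (inner ℝ (u j) (u j) : ℝ) = 1 := by
      rw [real_inner_self_eq_norm_sq, hunit j hj]; norm_num
    have h2 : ∀ i ∈ (Finset.range k).erase j, (inner ℝ (u i) (u j) : ℝ) = c := by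
      intro i hi
      have hi' := Finset.mem_of_mem_erase hi
      exact hangle i (Finset.mem_range.mp hi') j hj (Finset.ne_of_mem_erase hi)
    rw [h1, Finset.sum_congr rfl h2, Finset.sum_const,
      Finset.card_erase_of_mem hjmem, Finset.card_range]
    have : ((k-1 : ℕ) : ℝ) = (k:ℝ) - 1 := by
      rw [Nat.cast_sub hk]; norm_num
    rw [nsmul_eq_mul, this, ha]
  have hsmem : s ∈ Submodule.span ℝ (v '' Set.Iio k) := by
    rw [hs]
    exact Submodule.sum_mem _ fun i hi => hspan i (Finset.mem_range.mp hi)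
  have hvs : (inner ℝ (v k) s : ℝ) = 0 := hvk_orth s hsmem
  have hkk : k - 1 < k := Nat.sub_lt hk one_pos
  -- t^2
  have hnn : 0 ≤ (a/((k:ℝ)*c))^2 - a/(k:ℝ) := by
    have key : (a/((k:ℝ)*c))^2 - a/(k:ℝ)
        = a * ((1-c)*(1+(k:ℝ)*c)) / ((k:ℝ)*c)^2 := by
      field_simp
      ring
    rw [key]
    exact div_nonneg (mul_nonneg ha0.le (mul_nonneg (by linarith) (by positivity))) (by positivity)
  have ht2 : t^2 = (a/((k:ℝ)*c))^2 - a/(k:ℝ) := by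
    rw [ht, hsu (k-1) hkk]
    have : (((k:ℝ)-1)*c + 1)/(k:ℝ) = a/(k:ℝ) := by rw [ha]; ring_nf
    rw [this, Real.sq_sqrt hnn]
  -- ‖s‖^2 = k * a
  have hss : (inner ℝ s s : ℝ) = (k:ℝ) * a := by
    nth_rewrite 2 [hs]
    rw [inner_sum,
      Finset.sum_congr rfl (fun j hj => hsu j (Finset.mem_range.mp hj)),
      Finset.sum_const, Finset.card_range, nsmul_eq_mul]
  -- ‖w‖
  have hwsq : ‖w‖^2 = (a/((k:ℝ)*c))^2 := by
    rw [hw, norm_add_sq_real, norm_smul, norm_smul]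
    have hcross : (inner ℝ ((k:ℝ)⁻¹ • s) (t • v k) : ℝ) = 0 := by
      rw [real_inner_smul_left, real_inner_smul_right,
        real_inner_comm, hvs]
      ring
    rw [hcross, hvk_unit, mul_pow, mul_pow]
    have hns : ‖s‖^2 = (k:ℝ) * a := by
      rw [← real_inner_self_eq_norm_sq, hss]
    rw [hns]
    simp only [norm_inv, Real.norm_natCast, Real.norm_eq_abs, sq_abs, Nat.abs_cast, one_pow, mul_one]
    rw [ht2]
    field_simp
    ring
  have hwn : ‖w‖ = a/((k:ℝ)*c) := by
    have h1 : 0 ≤ a/((k:ℝ)*c) := by positivity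
    exact (pow_left_inj₀ (norm_nonneg w) h1 two_ne_zero).mp hwsq
  have hwne : ‖w‖ ≠ 0 := by rw [hwn]; positivity
  constructor
  · rw [hwn, ha]
  · intro j hj
    have hwu : (inner ℝ w (u j) : ℝ) = a / k := by
      rw [hw, inner_add_left, real_inner_smul_left, real_inner_smul_left,
        hsu j hj, hvk_orth (u j) (hspan j hj)]
      ring
    rw [real_inner_smul_left, hwu, hwn]
    field_simp
end
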